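/- For every α ∈ ℂ, θ ∈ [0,π], φ ∈ ℝ, the super-coherent states are eigenvectors of the corresponding super-annihilation operators with eigenvalue α: A_{−1}|α,θ,φ⟩_{L+} = α·|α,θ,φ⟩_{L+}, A_1|α,θ,φ⟩_{L−} = α·|α,θ,φ⟩_{L−}, Aᵀ_{−1}|α,θ,φ⟩_{B+} = α·|α,θ,φ⟩_{B+}, and Aᵀ_1|α,θ,φ⟩_{B−} = α·|α,θ,φ⟩_{B−}. -/

import Mathlib

open scoped ComplexConjugate

noncomputable section

/-- The bosonic annihilation operator on coefficient sequences:
`(aψ)(n) = √(n+1)·ψ(n+1)`. -/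
noncomputable def aOp (ψ : ℕ → ℂ) : ℕ → ℂ := fun n => (Real.sqrt (n + 1) : ℂ) * ψ (n + 1)

/-- The super-annihilation operator `A_ε (ψ0, ψ1) = (aψ0 + ε·ψ1, aψ1)` (for `ε = ±1`). -/
noncomputable def A (ε : ℂ) (Ψ : (ℕ → ℂ) × (ℕ → ℂ)) : (ℕ → ℂ) × (ℕ → ℂ) :=
  (aOp Ψ.1 + ε • Ψ.2, aOp Ψ.2)

/-- The super-annihilation operator `Aᵀ_ε (ψ0, ψ1) = (aψ0, ε·ψ0 + aψ1)` (for `ε = ±1`). -/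
noncomputable def AT (ε : ℂ) (Ψ : (ℕ → ℂ) × (ℕ → ℂ)) : (ℕ → ℂ) × (ℕ → ℂ) :=
  (aOp Ψ.1, ε • Ψ.1 + aOp Ψ.2)

/-- The displaced Fock state `ψ0^α = D(α)|0⟩` as a coefficient sequence. -/
noncomputable def psi0 (α : ℂ) : ℕ → ℂ := fun n =>
  Complex.exp (-(‖α‖ ^ 2 : ℝ) / 2) * α ^ n / Real.sqrt n.factorial

/-- The displaced Fock state `ψ1^α = D(α)|1⟩` as a coefficient sequence. -/
noncomputable def psi1 (α : ℂ) : ℕ → ℂ := fun n =>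
  if n = 0 then -conj α * Complex.exp (-(‖α‖ ^ 2 : ℝ) / 2)
  else Complex.exp (-(‖α‖ ^ 2 : ℝ) / 2) * α ^ (n - 1) * ((n : ℂ) - (‖α‖ ^ 2 : ℝ)) /
    Real.sqrt n.factorial

/-- The super-coherent state `|α,θ,φ⟩_{L_ε}` (for sign `ε = ±1`) as a pair of
coefficient sequences. -/
noncomputable def scL (α : ℂ) (θ φ : ℝ) (ε : ℂ) : (ℕ → ℂ) × (ℕ → ℂ) :=
  ((Real.cos (θ / 2) : ℂ) • psi0 α +
      ((Real.sin (θ / 2) : ℂ) * Complex.exp (φ * Complex.I) / Real.sqrt 2) • psi1 α,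
    (ε * ((Real.sin (θ / 2) : ℂ) * Complex.exp (φ * Complex.I) / Real.sqrt 2)) • psi0 α)

/-- The super-coherent state `|α,θ,φ⟩_{B_ε}` (for sign `ε = ±1`) as a pair of
coefficient sequences. -/
noncomputable def scB (α : ℂ) (θ φ : ℝ) (ε : ℂ) : (ℕ → ℂ) × (ℕ → ℂ) :=
  (((Real.sin (θ / 2) : ℂ) * Complex.exp (φ * Complex.I) / Real.sqrt 2) • psi0 α,
    (Real.cos (θ / 2) : ℂ) • psi0 α +
      (ε * ((Real.sin (θ / 2) : ℂ) * Complex.exp (φ * Complex.I) / Real.sqrt 2)) • psi1 α)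

lemma sqrt_factorial_succ (n : ℕ) :
    (Real.sqrt (n + 1).factorial : ℝ) = Real.sqrt (n + 1) * Real.sqrt n.factorial := by
  rw [← Real.sqrt_mul (by positivity)]
  norm_num [Nat.factorial_succ, mul_comm]

lemma sqrt_factorial_ne (n : ℕ) : (Real.sqrt n.factorial : ℂ) ≠ 0 := by
  have : (0:ℝ) < Real.sqrt n.factorial := Real.sqrt_pos.2 (by positivity)
  exact_mod_cast this.ne'

lemma sqrt_succ_ne (n : ℕ) : ((Real.sqrt (n + 1) : ℝ) : ℂ) ≠ 0 := by
  have : (0:ℝ) < Real.sqrt (n + 1) := Real.sqrt_pos.2 (by positivity)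
  exact_mod_cast this.ne'

lemma aOp_psi0 (α : ℂ) : aOp (psi0 α) = α • psi0 α := by
  funext n
  simp only [aOp, psi0, Pi.smul_apply, smul_eq_mul]
  have h : (Real.sqrt ↑(n + 1).factorial : ℂ) =
      (Real.sqrt (n + 1) : ℂ) * (Real.sqrt n.factorial : ℂ) := by
    push_cast [sqrt_factorial_succ n]; ring
  rw [h]
  field_simp [sqrt_factorial_ne, sqrt_succ_ne]
  push_cast
  ring

lemma aOp_psi1 (α : ℂ) : aOp (psi1 α) = psi0 α + α • psi1 α := by
  funext n
  simp only [aOp, psi1, psi0, Pi.add_apply, Pi.smul_apply, smul_eq_mul]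
  rcases n with _ | m
  · norm_num
    have hc : α * (starRingEnd ℂ) α = ((‖α‖ : ℝ) : ℂ) ^ 2 := by
      rw [Complex.mul_conj]
      norm_cast
      exact (Complex.sq_norm α).symm
    push_cast
    linear_combination Complex.exp (-((‖α‖ : ℝ) : ℂ) ^ 2 / 2) * hc
  · simp only [Nat.succ_ne_zero, if_neg, Nat.add_sub_cancel]
    have h : (Real.sqrt ↑(m + 1 + 1).factorial : ℂ) =
        (Real.sqrt ((m:ℝ) + 1 + 1) : ℂ) * (Real.sqrt (m + 1).factorial : ℂ) := by
      have := sqrt_factorial_succ (m + 1)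
      push_cast at this ⊢
      rw [this]
      push_cast
      ring
    rw [h]
    push_cast
    have h1 : ((Real.sqrt ((m:ℝ) + 1 + 1) : ℝ) : ℂ) ≠ 0 := by
      have : (0:ℝ) < Real.sqrt ((m:ℝ) + 1 + 1) := Real.sqrt_pos.2 (by positivity)
      exact_mod_cast this.ne'
    have h2 := sqrt_factorial_ne (m + 1)
    field_simp
    ring

/-- The super-coherent states are eigenvectors of the corresponding
super-annihilation operators with eigenvalue `α`:
`A_{−1}|α,θ,φ⟩_{L+} = α|α,θ,φ⟩_{L+}`, `A_1|α,θ,φ⟩_{L−} = α|α,θ,φ⟩_{L−}`,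
`Aᵀ_{−1}|α,θ,φ⟩_{B+} = α|α,θ,φ⟩_{B+}`, `Aᵀ_1|α,θ,φ⟩_{B−} = α|α,θ,φ⟩_{B−}`. -/
theorem supercoherent_eigenvectors (α : ℂ) (θ φ : ℝ) (hθ0 : 0 ≤ θ) (hθπ : θ ≤ Real.pi) :
    A (-1) (scL α θ φ 1) = α • scL α θ φ 1 ∧
    A 1 (scL α θ φ (-1)) = α • scL α θ φ (-1) ∧
    AT (-1) (scB α θ φ 1) = α • scB α θ φ 1 ∧
    AT 1 (scB α θ φ (-1)) = α • scB α θ φ (-1) := by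
  have e0 : ∀ n : ℕ, (Real.sqrt (n + 1) : ℂ) * psi0 α (n + 1) = α * psi0 α n :=
    fun n => congrFun (aOp_psi0 α) n
  have e1 : ∀ n : ℕ, (Real.sqrt (n + 1) : ℂ) * psi1 α (n + 1) = psi0 α n + α * psi1 α n :=
    fun n => congrFun (aOp_psi1 α) n
  set c : ℂ := (Real.cos (θ / 2) : ℂ) with hcdef
  set s : ℂ := (Real.sin (θ / 2) : ℂ) * Complex.exp (φ * Complex.I) / Real.sqrt 2 with hsdef
  refine ⟨Prod.ext ?_ ?_, Prod.ext ?_ ?_, Prod.ext ?_ ?_, Prod.ext ?_ ?_⟩ <;>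
    funext n <;>
    simp only [A, AT, scL, scB, aOp, Prod.fst, Prod.snd, Prod.smul_mk, Pi.add_apply,
      Pi.smul_apply, Pi.neg_apply, smul_eq_mul, neg_mul, one_mul, neg_neg]
  · linear_combination c * e0 n + s * e1 n
  · linear_combination s * e0 n
  · linear_combination c * e0 n + s * e1 n
  · linear_combination (-s) * e0 n
  · linear_combination s * e0 n
  · linear_combination c * e0 n + s * e1 n
  · linear_combination s * e0 n
  · linear_combination c * e0 n + (-s) * e1 n
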